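/- arXiv:2007.13095 — 2 statements merged into one kernel-verified Lean document; each statement's English description precedes it below -/
import Mathlib

section
/- Let G be a connected graph on vertex set {1,...,n} with n ≥ 2 and Φ = (F_1,...,F_n) with |V(F_i)| ≥ 2 for all i. Then G[Φ] has a minimum dominating set U with |U ∩ V(F_i)| ≤ 1 for all i ∈ [n] such that the subgraph induced by V(G[Φ]) − U is connected and has no isolated vertices; consequently γ(G[Φ]) = γ_r(G[Φ]) = γ^{oc}(G[Φ]). -/
open scoped Classical

/-- A dominating set: every vertex is in `D` or adjacent to a vertex of `D`. -/
def isDominatingSet {V : Type*} (H : SimpleGraph V) (D : Finset V) : Prop :=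
  ∀ v : V, v ∈ D ∨ ∃ u ∈ D, H.Adj u v

/-- A total dominating set: every vertex has a neighbor in `D`. -/
def isTotalDominatingSet {V : Type*} (H : SimpleGraph V) (D : Finset V) : Prop :=
  ∀ v : V, ∃ u ∈ D, H.Adj u v

def isMinimalDominatingSet {V : Type*} (H : SimpleGraph V) (D : Finset V) : Prop :=
  isDominatingSet H D ∧ ∀ D' : Finset V, D' ⊂ D → ¬ isDominatingSet H D'

def isMinimalTotalDominatingSet {V : Type*} (H : SimpleGraph V) (D : Finset V) : Prop :=
  isTotalDominatingSet H D ∧ ∀ D' : Finset V, D' ⊂ D → ¬ isTotalDominatingSet H D'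

noncomputable def domNum {V : Type*} (H : SimpleGraph V) : ℕ :=
  sInf {k | ∃ D : Finset V, isDominatingSet H D ∧ D.card = k}

noncomputable def totalDomNum {V : Type*} (H : SimpleGraph V) : ℕ :=
  sInf {k | ∃ D : Finset V, isTotalDominatingSet H D ∧ D.card = k}

noncomputable def upperDomNum {V : Type*} (H : SimpleGraph V) : ℕ :=
  sSup {k | ∃ D : Finset V, isMinimalDominatingSet H D ∧ D.card = k}

noncomputable def upperTotalDomNum {V : Type*} (H : SimpleGraph V) : ℕ :=
  sSup {k | ∃ D : Finset V, isMinimalTotalDominatingSet H D ∧ D.card = k}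

/-- Well (γ-)dominated: all minimal dominating sets have the same size. -/
def WellDominated {V : Type*} (H : SimpleGraph V) : Prop :=
  ∀ D₁ D₂ : Finset V, isMinimalDominatingSet H D₁ → isMinimalDominatingSet H D₂ →
    D₁.card = D₂.card

/-- Well γ_t-dominated: all minimal total dominating sets have the same size. -/
def WellTotalDominated {V : Type*} (H : SimpleGraph V) : Prop :=
  ∀ D₁ D₂ : Finset V, isMinimalTotalDominatingSet H D₁ → isMinimalTotalDominatingSet H D₂ →
    D₁.card = D₂.card

/-- Restrained dominating set: dominating and every vertex outside `D` has a
neighbor outside `D`. -/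
def isRestrainedDominatingSet {V : Type*} (H : SimpleGraph V) (D : Finset V) : Prop :=
  isDominatingSet H D ∧ ∀ v ∉ D, ∃ u ∉ D, H.Adj u v

/-- Outer-connected dominating set: dominating and the subgraph induced by the
complement of `D` is connected. -/
def isOuterConnectedDominatingSet {V : Type*} (H : SimpleGraph V) (D : Finset V) : Prop :=
  isDominatingSet H D ∧ (H.induce ((↑D : Set V)ᶜ)).Connected

def isTotalRestrainedDominatingSet {V : Type*} (H : SimpleGraph V) (D : Finset V) : Prop :=
  isTotalDominatingSet H D ∧ ∀ v ∉ D, ∃ u ∉ D, H.Adj u v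

def isTotalOuterConnectedDominatingSet {V : Type*} (H : SimpleGraph V) (D : Finset V) : Prop :=
  isTotalDominatingSet H D ∧ (H.induce ((↑D : Set V)ᶜ)).Connected

noncomputable def restrainedDomNum {V : Type*} (H : SimpleGraph V) : ℕ :=
  sInf {k | ∃ D : Finset V, isRestrainedDominatingSet H D ∧ D.card = k}

noncomputable def ocDomNum {V : Type*} (H : SimpleGraph V) : ℕ :=
  sInf {k | ∃ D : Finset V, isOuterConnectedDominatingSet H D ∧ D.card = k}

noncomputable def totalRestrainedDomNum {V : Type*} (H : SimpleGraph V) : ℕ :=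
  sInf {k | ∃ D : Finset V, isTotalRestrainedDominatingSet H D ∧ D.card = k}

noncomputable def totalOcDomNum {V : Type*} (H : SimpleGraph V) : ℕ :=
  sInf {k | ∃ D : Finset V, isTotalOuterConnectedDominatingSet H D ∧ D.card = k}

/-- Paired dominating set: dominating and the induced subgraph on `D` has a
perfect matching. -/
def isPairedDominatingSet {V : Type*} (H : SimpleGraph V) (D : Finset V) : Prop :=
  isDominatingSet H D ∧
    ∃ M : SimpleGraph.Subgraph (H.induce (↑D : Set V)), M.IsPerfectMatching

noncomputable def pairedDomNum {V : Type*} (H : SimpleGraph V) : ℕ :=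
  sInf {k | ∃ D : Finset V, isPairedDominatingSet H D ∧ D.card = k}

def isIndependentSet {V : Type*} (H : SimpleGraph V) (D : Finset V) : Prop :=
  ∀ u ∈ D, ∀ v ∈ D, ¬ H.Adj u v

def isMaximalIndependentSet {V : Type*} (H : SimpleGraph V) (D : Finset V) : Prop :=
  isIndependentSet H D ∧ ∀ D' : Finset V, D ⊂ D' → ¬ isIndependentSet H D'

/-- The independent domination number `i(H)`. -/
noncomputable def indepDomNum {V : Type*} (H : SimpleGraph V) : ℕ :=
  sInf {k | ∃ D : Finset V, isMaximalIndependentSet H D ∧ D.card = k}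

/-- The independence number `β₀(H)`. -/
noncomputable def indepNum {V : Type*} (H : SimpleGraph V) : ℕ :=
  sSup {k | ∃ D : Finset V, isIndependentSet H D ∧ D.card = k}

/-- An efficient dominating set: every vertex is dominated by exactly one
member of `D`. -/
def isEfficientDominatingSet {V : Type*} (H : SimpleGraph V) (D : Finset V) : Prop :=
  ∀ v : V, ∃! u : V, u ∈ D ∧ (u = v ∨ H.Adj u v)

/-- The generalized lexicographic product `G[Φ]` of a graph `G` on `Fin n` and a
family `Φ = (F 0, …, F (n-1))` of pairwise disjoint graphs: the `F i` are induced
subgraphs, and vertices in distinct `F i`, `F j` are adjacent iff `i j ∈ E(G)`. -/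
def GLP {n : ℕ} (G : SimpleGraph (Fin n)) {V : Fin n → Type*}
    (F : ∀ i, SimpleGraph (V i)) : SimpleGraph (Σ i, V i) where
  Adj x y := (x.1 ≠ y.1 ∧ G.Adj x.1 y.1) ∨ ∃ h : x.1 = y.1, (F y.1).Adj (h ▸ x.2) y.2
  symm := by
    constructor
    rintro ⟨i, a⟩ ⟨j, b⟩ (⟨hne, hadj⟩ | ⟨h, hadj⟩)
    · exact Or.inl ⟨fun hh => hne hh.symm, hadj.symm⟩
    · dsimp only at h
      subst h
      exact Or.inr ⟨rfl, hadj.symm⟩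
  loopless := by
    constructor
    rintro ⟨i, a⟩ (⟨hne, _⟩ | ⟨h, hadj⟩)
    · exact hne rfl
    · exact (F i).irrefl hadj

/-- The number of vertices of `D ∩ V(F i)`. -/
noncomputable def layerCount {n : ℕ} {V : Fin n → Type*} [∀ i, Fintype (V i)]
    (D : Finset (Σ i, V i)) (i : Fin n) : ℕ :=
  (D.filter (fun x => x.1 = i)).card

/-! Replacing a second vertex of some layer `i` of a dominating set by any vertex of a
layer adjacent to `i` in `G` keeps it dominating, and it either shrinks the set or makes
it meet one more layer; so a minimum dominating set can be taken to meet each layer at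
most once. Since every layer has two vertices, such a set misses a vertex of every layer,
and as every vertex of `G[Φ]` is joined to all of the layers adjacent to its own, these
missed vertices hold the complement together along the paths of `G`. -/

section Layers

variable {ι : Type*} {V : ι → Type*}

lemma image_fst_erase_of_fst_eq [DecidableEq ι] {D : Finset (Σ i, V i)} {x y : Σ i, V i}
    (hx : x ∈ D) (hxy : x ≠ y) (hfst : x.1 = y.1) :
    (D.erase y).image Sigma.fst = D.image Sigma.fst := by
  refine (Finset.image_subset_image (Finset.erase_subset y D)).antisymm fun i hi => ?_
  obtain ⟨z, hz, rfl⟩ := Finset.mem_image.mp hi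
  by_cases hzy : z = y
  · exact Finset.mem_image.mpr ⟨x, Finset.mem_erase.mpr ⟨hxy, hx⟩, hzy ▸ hfst⟩
  · exact Finset.mem_image_of_mem _ (Finset.mem_erase.mpr ⟨hzy, hz⟩)

lemma exists_notMem_of_injOn_fst [∀ i, Nontrivial (V i)] {U : Finset (Σ i, V i)}
    (hU : Set.InjOn Sigma.fst (U : Set (Σ i, V i))) (i : ι) : ∃ b : V i, ⟨i, b⟩ ∉ U := by
  obtain ⟨a, b, hab⟩ := exists_pair_ne (V i)
  by_contra! h
  exact hab (eq_of_heq (Sigma.mk.inj_iff.mp (hU (h a) (h b) rfl)).2)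

end Layers

lemma layerCount_le_one_of_injOn {n : ℕ} {V : Fin n → Type*} [∀ i, Fintype (V i)]
    {U : Finset (Σ i, V i)} (hU : Set.InjOn Sigma.fst (U : Set (Σ i, V i)))
    (i : Fin n) : layerCount U i ≤ 1 :=
  Finset.card_le_one.mpr fun _ ha _ hb =>
    hU (Finset.mem_filter.mp ha).1 (Finset.mem_filter.mp hb).1
      ((Finset.mem_filter.mp ha).2.trans (Finset.mem_filter.mp hb).2.symm)

namespace GLP

variable {n : ℕ} {G : SimpleGraph (Fin n)} {V : Fin n → Type*} {F : ∀ i, SimpleGraph (V i)}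

lemma adj_of_adj_fst {x y : Σ i, V i} (h : G.Adj x.1 y.1) : (GLP G F).Adj x y :=
  Or.inl ⟨h.ne, h⟩

lemma adj_fst_of_adj {x y : Σ i, V i} (h : (GLP G F).Adj x y) (hne : x.1 ≠ y.1) :
    G.Adj x.1 y.1 := by
  rcases h with ⟨-, h⟩ | ⟨heq, -⟩
  exacts [h, absurd heq hne]

/-- `w` takes over from `y`: it dominates the whole layer of `y`, and `x` dominates the
other neighbours of `y`. -/
lemma isDominatingSet_insert_erase {D : Finset (Σ i, V i)} (hD : isDominatingSet (GLP G F) D)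
    {x y w : Σ i, V i} (hx : x ∈ D) (hxy : x ≠ y) (hfst : x.1 = y.1) (hw : G.Adj y.1 w.1) :
    isDominatingSet (GLP G F) (insert w (D.erase y)) := by
  have hx' : x ∈ insert w (D.erase y) :=
    Finset.mem_insert_of_mem (Finset.mem_erase.mpr ⟨hxy, hx⟩)
  have hw' : w ∈ insert w (D.erase y) := Finset.mem_insert_self w _
  intro v
  by_cases hvy : v.1 = y.1
  · by_cases hv : v ∈ D ∧ v ≠ y
    · exact Or.inl (Finset.mem_insert_of_mem (Finset.mem_erase.mpr ⟨hv.2, hv.1⟩))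
    · exact Or.inr ⟨w, hw', adj_of_adj_fst (hvy ▸ hw.symm)⟩
  rcases hD v with hv | ⟨u, hu, huv⟩
  · have hvy' : v ≠ y := fun h => hvy (h ▸ rfl)
    exact Or.inl (Finset.mem_insert_of_mem (Finset.mem_erase.mpr ⟨hvy', hv⟩))
  by_cases huy : u = y
  · subst huy
    exact Or.inr ⟨x, hx', adj_of_adj_fst (hfst ▸ adj_fst_of_adj huv (Ne.symm hvy))⟩
  · exact Or.inr ⟨u, Finset.mem_insert_of_mem (Finset.mem_erase.mpr ⟨huy, hu⟩), huv⟩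

lemma exists_isDominatingSet_excess_lt [∀ i, Nonempty (V i)] {D : Finset (Σ i, V i)}
    (hD : isDominatingSet (GLP G F) D) {x y : Σ i, V i} (hx : x ∈ D) (hy : y ∈ D)
    (hxy : x ≠ y) (hfst : x.1 = y.1) {j : Fin n} (hj : G.Adj y.1 j) :
    ∃ D', isDominatingSet (GLP G F) D' ∧ D'.card ≤ D.card ∧
      D'.card - (D'.image Sigma.fst).card < D.card - (D.image Sigma.fst).card := by
  have himage := image_fst_erase_of_fst_eq hx hxy hfst
  have hlt : (D.image Sigma.fst).card < D.card :=
    Finset.card_image_le.lt_of_ne fun h => hxy (Finset.card_image_iff.mp h hx hy hfst)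
  have hcard := Finset.card_erase_of_mem hy
  by_cases hlayer : ∃ u ∈ D, u.1 = j
  · obtain ⟨u, hu, rfl⟩ := hlayer
    have hu' : u ∈ D.erase y := Finset.mem_erase.mpr ⟨fun h => hj.ne (h ▸ rfl), hu⟩
    refine ⟨_, isDominatingSet_insert_erase hD hx hxy hfst hj, ?_⟩
    rw [Finset.insert_eq_of_mem hu', himage]
    omega
  · push Not at hlayer
    obtain ⟨b⟩ := ‹∀ i, Nonempty (V i)› j
    have hj' : j ∉ (D.erase y).image Sigma.fst := by
      rw [himage]
      simpa using fun c hc => hlayer ⟨j, c⟩ hc rfl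
    have hb : (⟨j, b⟩ : Σ i, V i) ∉ D.erase y := fun h => hj' (Finset.mem_image_of_mem _ h)
    refine ⟨_, isDominatingSet_insert_erase (w := ⟨j, b⟩) hD hx hxy hfst hj, ?_⟩
    rw [Finset.card_insert_of_notMem hb, Finset.image_insert, Finset.card_insert_of_notMem hj',
      himage]
    omega

lemma exists_isDominatingSet_injOn_fst [∀ i, Nonempty (V i)] (hadj : ∀ i, ∃ j, G.Adj i j)
    {D : Finset (Σ i, V i)} (hD : isDominatingSet (GLP G F) D) :
    ∃ U, isDominatingSet (GLP G F) U ∧ U.card ≤ D.card ∧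
      Set.InjOn Sigma.fst (U : Set (Σ i, V i)) := by
  induction h : D.card - (D.image Sigma.fst).card using Nat.strong_induction_on
    generalizing D with
  | _ k ih =>
    by_cases hinj : Set.InjOn Sigma.fst (D : Set (Σ i, V i))
    · exact ⟨D, hD, le_rfl, hinj⟩
    obtain ⟨x, hx, y, hy, hfst, hxy⟩ : ∃ x ∈ D, ∃ y ∈ D, x.1 = y.1 ∧ x ≠ y := by
      simpa [Set.InjOn] using hinj
    obtain ⟨j, hj⟩ := hadj y.1
    obtain ⟨D', hD', hle, hlt⟩ := exists_isDominatingSet_excess_lt hD hx hy hxy hfst hj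
    obtain ⟨U, hU, hUle, hUinj⟩ := ih _ (h ▸ hlt) hD' rfl
    exact ⟨U, hU, hUle.trans hle, hUinj⟩

lemma connected_induce [Nontrivial (Fin n)] (hG : G.Connected) {S : Set (Σ i, V i)}
    (hS : ∀ i, ∃ b, ⟨i, b⟩ ∈ S) : ((GLP G F).induce S).Connected := by
  choose sel hsel using hS
  let φ : G →g (GLP G F).induce S :=
    ⟨fun i => ⟨⟨i, sel i⟩, hsel i⟩, fun h => adj_of_adj_fst h⟩
  obtain ⟨i₀⟩ := hG.nonempty
  refine (SimpleGraph.connected_iff_exists_forall_reachable _).mpr ⟨φ i₀, fun v => ?_⟩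
  obtain ⟨j, hj⟩ := hG.preconnected.exists_adj_of_nontrivial v.1.1
  have hvj : ((GLP G F).induce S).Adj (φ j) v := adj_of_adj_fst hj.symm
  exact ((hG.preconnected i₀ j).map φ).trans hvj.reachable

lemma exists_mem_adj [Nontrivial (Fin n)] (hG : G.Connected) {S : Set (Σ i, V i)}
    (hS : ∀ i, ∃ b, ⟨i, b⟩ ∈ S) (v : Σ i, V i) : ∃ w ∈ S, (GLP G F).Adj w v := by
  obtain ⟨j, hj⟩ := hG.preconnected.exists_adj_of_nontrivial v.1
  obtain ⟨b, hb⟩ := hS j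
  exact ⟨⟨j, b⟩, hb, adj_of_adj_fst hj.symm⟩

end GLP

section Domination

variable {W : Type*} {H : SimpleGraph W}

lemma domNum_le_card {D : Finset W} (hD : isDominatingSet H D) : domNum H ≤ D.card :=
  Nat.sInf_le ⟨D, hD, rfl⟩

lemma exists_isDominatingSet_card_eq_domNum [Fintype W] :
    ∃ D, isDominatingSet H D ∧ D.card = domNum H :=
  Nat.sInf_mem (s := {k | ∃ D, isDominatingSet H D ∧ D.card = k})
    ⟨_, Finset.univ, fun v => Or.inl (Finset.mem_univ v), rfl⟩

lemma sInf_card_eq_domNum {P : Finset W → Prop} (hP : ∀ D, P D → isDominatingSet H D)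
    {U : Finset W} (hU : P U) (hUcard : U.card = domNum H) :
    domNum H = sInf {k | ∃ D, P D ∧ D.card = k} := by
  refine le_antisymm (le_csInf ⟨_, U, hU, rfl⟩ ?_) (hUcard ▸ Nat.sInf_le ⟨U, hU, rfl⟩)
  rintro _ ⟨D, hD, rfl⟩
  exact domNum_le_card (hP D hD)

end Domination

/-- If `|V(F i)| ≥ 2` for all `i`, then `G[Φ]` has a minimum dominating set `U`
meeting each `V(F i)` at most once whose complement induces a connected graph
with no isolated vertices; consequently `γ(G[Φ]) = γ_r(G[Φ]) = γ^{oc}(G[Φ])`. -/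
theorem stmt_9 {n : ℕ} (hn : 2 ≤ n) (G : SimpleGraph (Fin n)) (hG : G.Connected)
    (V : Fin n → Type) [∀ i, Fintype (V i)] (F : ∀ i, SimpleGraph (V i))
    (hV : ∀ i, 2 ≤ Fintype.card (V i)) :
    (∃ U : Finset (Σ i, V i),
      (isDominatingSet (GLP G F) U ∧ U.card = domNum (GLP G F)) ∧
      (∀ i, layerCount U i ≤ 1) ∧
      (∀ v ∉ U, ∃ w ∉ U, (GLP G F).Adj w v) ∧
      ((GLP G F).induce ((↑U : Set (Σ i, V i))ᶜ)).Connected) ∧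
    domNum (GLP G F) = restrainedDomNum (GLP G F) ∧
    domNum (GLP G F) = ocDomNum (GLP G F) := by
  have : Nontrivial (Fin n) := Fin.nontrivial_iff_two_le.mpr hn
  have : ∀ i, Nontrivial (V i) := fun i => Fintype.one_lt_card_iff_nontrivial.mp (hV i)
  obtain ⟨D, hD, hDcard⟩ := exists_isDominatingSet_card_eq_domNum (H := GLP G F)
  obtain ⟨U, hU, hUle, hUinj⟩ := GLP.exists_isDominatingSet_injOn_fst
    hG.preconnected.exists_adj_of_nontrivial hD
  have hUcard : U.card = domNum (GLP G F) := le_antisymm (hDcard ▸ hUle) (domNum_le_card hU)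
  have hmiss := exists_notMem_of_injOn_fst hUinj
  have hres : ∀ v ∉ U, ∃ w ∉ U, (GLP G F).Adj w v :=
    fun v _ => GLP.exists_mem_adj (S := (↑U)ᶜ) hG hmiss v
  have hconn := GLP.connected_induce (F := F) hG (S := (↑U)ᶜ) hmiss
  exact ⟨⟨U, ⟨hU, hUcard⟩, layerCount_le_one_of_injOn hUinj, hres, hconn⟩,
    sInf_card_eq_domNum (fun _ hD => hD.1) ⟨hU, hres⟩ hUcard,
    sInf_card_eq_domNum (fun _ hD => hD.1) ⟨hU, hconn⟩ hUcard⟩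
end

section
/- Let G be a connected graph on vertex set {1,...,n} with n ≥ 2 and Φ = (F_1,...,F_n). If i(F_1) = i(F_2) = ... = i(F_n), then i(G[Φ]) = i(G)·i(F_1). If β_0(F_1) = ... = β_0(F_n), then β_0(G[Φ]) = β_0(G)·β_0(F_1). -/
open scoped Classical

/-!
A set `D` of vertices of `G[Φ]` is the union of its layers `D ∩ V(F i)` over its support
`{i | D meets V(F i)}`. `D` is independent iff the support is independent in `G` and every layer
is independent in its `F i`. If `D` is maximal independent (and no `F i` is empty), the support
is maximal independent in `G` and every nonempty layer is maximal independent in its `F i`;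
conversely a union of maximal independent sets of equal size over a maximal independent set
of `G` is maximal. Summing the layer sizes gives both product formulas.
-/

section IndependentSets

variable {W : Type*} {H : SimpleGraph W}

theorem isMaximalIndependentSet_iff {D : Finset W} :
    isMaximalIndependentSet H D ↔
      isIndependentSet H D ∧ ∀ v ∉ D, ∃ u ∈ D, H.Adj u v := by
  refine ⟨fun ⟨hind, hmax⟩ => ⟨hind, fun v hv => ?_⟩, fun ⟨hind, hdom⟩ => ⟨hind, ?_⟩⟩
  · by_contra! hfree
    refine hmax (insert v D) (Finset.ssubset_insert hv) ?_
    intro a ha b hb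
    rcases Finset.mem_insert.mp ha with rfl | haD
    · rcases Finset.mem_insert.mp hb with rfl | hbD
      · exact H.loopless.irrefl _
      · exact fun h => hfree b hbD h.symm
    · rcases Finset.mem_insert.mp hb with rfl | hbD
      · exact hfree a haD
      · exact hind a haD b hbD
  · intro D' hsub hind'
    obtain ⟨v, hv', hv⟩ := Finset.exists_of_ssubset hsub
    obtain ⟨u, hu, hadj⟩ := hdom v hv
    exact hind' u (hsub.subset hu) v hv' hadj

theorem isMaximalIndependentSet.nonempty {D : Finset W} (hD : isMaximalIndependentSet H D)
    (v : W) : D.Nonempty := by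
  by_contra hempty
  rw [Finset.not_nonempty_iff_eq_empty] at hempty
  subst hempty
  obtain ⟨u, hu, -⟩ := (isMaximalIndependentSet_iff.mp hD).2 v (Finset.notMem_empty v)
  exact Finset.notMem_empty u hu

theorem indepDomNum_le_card {D : Finset W} (hD : isMaximalIndependentSet H D) :
    indepDomNum H ≤ D.card :=
  Nat.sInf_le ⟨D, hD, rfl⟩

theorem indepDomNum_eq_zero_of_isEmpty [IsEmpty W] : indepDomNum H = 0 := by
  have hempty : isMaximalIndependentSet H ∅ :=
    isMaximalIndependentSet_iff.mpr ⟨by simp [isIndependentSet], fun v _ => isEmptyElim v⟩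
  simpa using indepDomNum_le_card hempty

variable [Fintype W]

theorem exists_isMaximalIndependentSet_card_eq_indepDomNum (H : SimpleGraph W) :
    ∃ D : Finset W, isMaximalIndependentSet H D ∧ D.card = indepDomNum H := by
  obtain ⟨D, hD, hmax⟩ := Finset.exists_max_image
    (Finset.univ.filter (isIndependentSet H)) Finset.card ⟨∅, by simp [isIndependentSet]⟩
  have hDmax : isMaximalIndependentSet H D := ⟨(Finset.mem_filter.mp hD).2, fun D' hsub hind' =>
    (Finset.card_lt_card hsub).not_ge (hmax D' (by simpa using hind'))⟩
  exact Nat.sInf_mem (s := {k | ∃ D : Finset W, isMaximalIndependentSet H D ∧ D.card = k})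
    ⟨D.card, D, hDmax, rfl⟩

theorem indepNum_bddAbove (H : SimpleGraph W) :
    BddAbove {k | ∃ D : Finset W, isIndependentSet H D ∧ D.card = k} := by
  refine bddAbove_def.mpr ⟨Fintype.card W, ?_⟩
  rintro _ ⟨D, -, rfl⟩
  exact Finset.card_le_univ D

theorem card_le_indepNum {D : Finset W} (hD : isIndependentSet H D) : D.card ≤ indepNum H :=
  le_csSup (indepNum_bddAbove H) ⟨D, hD, rfl⟩

theorem exists_isIndependentSet_card_eq_indepNum (H : SimpleGraph W) :
    ∃ D : Finset W, isIndependentSet H D ∧ D.card = indepNum H :=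
  Nat.sSup_mem (by exact ⟨0, ∅, by simp [isIndependentSet], rfl⟩) (indepNum_bddAbove H)

end IndependentSets

section LexicographicProduct

variable {n : ℕ} {V : Fin n → Type*} {G : SimpleGraph (Fin n)} {F : ∀ i, SimpleGraph (V i)}

theorem GLP_adj_of_adj {i j : Fin n} (h : G.Adj i j) (a : V i) (b : V j) :
    (GLP G F).Adj ⟨i, a⟩ ⟨j, b⟩ :=
  Or.inl ⟨G.ne_of_adj h, h⟩

theorem GLP_adj_mk {i j : Fin n} {a : V i} {b : V j} (h : (GLP G F).Adj ⟨i, a⟩ ⟨j, b⟩) :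
    G.Adj i j ∨ i = j :=
  h.imp And.right Exists.fst

theorem GLP_adj_mk_mk {i : Fin n} {a b : V i} : (GLP G F).Adj ⟨i, a⟩ ⟨i, b⟩ ↔ (F i).Adj a b :=
  ⟨fun h => h.elim (fun h => absurd rfl h.1) fun ⟨_, h⟩ => h, fun h => Or.inr ⟨rfl, h⟩⟩

noncomputable def layer (D : Finset (Σ i, V i)) (i : Fin n) : Finset (V i) :=
  D.preimage (Sigma.mk i) sigma_mk_injective.injOn

theorem mem_layer {D : Finset (Σ i, V i)} {i : Fin n} {a : V i} :
    a ∈ layer D i ↔ (⟨i, a⟩ : Σ j, V j) ∈ D :=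
  Finset.mem_preimage

theorem card_eq_sum_card_layer (D : Finset (Σ i, V i)) :
    D.card = ∑ i ∈ D.image Sigma.fst, (layer D i).card := by
  conv_lhs => rw [← Finset.sigma_image_fst_preimage_mk D]
  exact Finset.card_sigma _ _

theorem isIndependentSet_sigma {S : Finset (Fin n)} {A : ∀ i, Finset (V i)}
    (hS : isIndependentSet G S) (hA : ∀ i, isIndependentSet (F i) (A i)) :
    isIndependentSet (GLP G F) (S.sigma A) := by
  rintro ⟨i, a⟩ hx ⟨j, b⟩ hy hadj
  rcases GLP_adj_mk hadj with hij | rfl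
  · exact hS i (Finset.mem_sigma.mp hx).1 j (Finset.mem_sigma.mp hy).1 hij
  · exact hA i a (Finset.mem_sigma.mp hx).2 b (Finset.mem_sigma.mp hy).2 (GLP_adj_mk_mk.mp hadj)

theorem isIndependentSet.image_fst {D : Finset (Σ i, V i)} (hD : isIndependentSet (GLP G F) D) :
    isIndependentSet G (D.image Sigma.fst) := by
  simp only [isIndependentSet, Finset.mem_image]
  rintro _ ⟨⟨i, a⟩, ha, rfl⟩ _ ⟨⟨j, b⟩, hb, rfl⟩ hij
  exact hD _ ha _ hb (GLP_adj_of_adj hij a b)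

theorem isIndependentSet.layer {D : Finset (Σ i, V i)} (hD : isIndependentSet (GLP G F) D)
    (i : Fin n) : isIndependentSet (F i) (layer D i) := fun _ ha _ hb hab =>
  hD _ (mem_layer.mp ha) _ (mem_layer.mp hb) (GLP_adj_mk_mk.mpr hab)

/-- Equal cardinalities make every `A i` nonempty as soon as one `V i` is; this is what
dominates the layers outside `S`. -/
theorem isMaximalIndependentSet_sigma {S : Finset (Fin n)} {A : ∀ i, Finset (V i)}
    (hS : isMaximalIndependentSet G S) (hA : ∀ i, isMaximalIndependentSet (F i) (A i))
    (hcard : ∀ i j, (A i).card = (A j).card) :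
    isMaximalIndependentSet (GLP G F) (S.sigma A) := by
  refine isMaximalIndependentSet_iff.mpr ⟨isIndependentSet_sigma hS.1 fun i => (hA i).1, ?_⟩
  rintro ⟨j, c⟩ hc
  by_cases hj : j ∈ S
  · obtain ⟨u, hu, hadj⟩ :=
      (isMaximalIndependentSet_iff.mp (hA j)).2 c fun hc' => hc (Finset.mem_sigma.mpr ⟨hj, hc'⟩)
    exact ⟨⟨j, u⟩, Finset.mem_sigma.mpr ⟨hj, hu⟩, GLP_adj_mk_mk.mpr hadj⟩
  · obtain ⟨k, hk, hkj⟩ := (isMaximalIndependentSet_iff.mp hS).2 j hj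
    obtain ⟨u, hu⟩ : (A k).Nonempty := by
      rw [← Finset.card_pos, hcard k j, Finset.card_pos]
      exact (hA j).nonempty c
    exact ⟨⟨k, u⟩, Finset.mem_sigma.mpr ⟨hk, hu⟩, GLP_adj_of_adj hkj u c⟩

theorem isMaximalIndependentSet.image_fst [∀ i, Nonempty (V i)] {D : Finset (Σ i, V i)}
    (hD : isMaximalIndependentSet (GLP G F) D) :
    isMaximalIndependentSet G (D.image Sigma.fst) := by
  refine isMaximalIndependentSet_iff.mpr ⟨hD.1.image_fst, fun j hj => ?_⟩
  obtain ⟨c⟩ := ‹∀ i, Nonempty (V i)› j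
  have hc : (⟨j, c⟩ : Σ i, V i) ∉ D := fun h => hj (Finset.mem_image_of_mem Sigma.fst h)
  obtain ⟨⟨k, a⟩, ha, hadj⟩ := (isMaximalIndependentSet_iff.mp hD).2 _ hc
  rcases GLP_adj_mk hadj with hkj | rfl
  · exact ⟨k, Finset.mem_image_of_mem Sigma.fst ha, hkj⟩
  · exact absurd (Finset.mem_image_of_mem Sigma.fst ha) hj

theorem isMaximalIndependentSet.layer {D : Finset (Σ i, V i)}
    (hD : isMaximalIndependentSet (GLP G F) D) {i : Fin n} (hi : i ∈ D.image Sigma.fst) :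
    isMaximalIndependentSet (F i) (layer D i) := by
  refine isMaximalIndependentSet_iff.mpr ⟨hD.1.layer i, fun c hc => ?_⟩
  obtain ⟨⟨k, a⟩, ha, hadj⟩ :=
    (isMaximalIndependentSet_iff.mp hD).2 ⟨i, c⟩ fun h => hc (mem_layer.mpr h)
  rcases GLP_adj_mk hadj with hki | rfl
  · exact absurd hki (hD.1.image_fst k (Finset.mem_image_of_mem Sigma.fst ha) i hi)
  · exact ⟨a, mem_layer.mpr ha, GLP_adj_mk_mk.mp hadj⟩

variable [∀ i, Fintype (V i)]

theorem indepNum_GLP_of_forall_eq {m : ℕ} (hF : ∀ i, indepNum (F i) = m) :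
    indepNum (GLP G F) = indepNum G * m := by
  apply le_antisymm
  · refine csSup_le ⟨0, ∅, by simp [isIndependentSet], rfl⟩ ?_
    rintro _ ⟨D, hD, rfl⟩
    calc D.card = ∑ i ∈ D.image Sigma.fst, (layer D i).card := card_eq_sum_card_layer D
      _ ≤ ∑ _i ∈ D.image Sigma.fst, m :=
          Finset.sum_le_sum fun i _ => hF i ▸ card_le_indepNum (hD.layer i)
      _ = (D.image Sigma.fst).card * m := by rw [Finset.sum_const, smul_eq_mul]
      _ ≤ indepNum G * m := Nat.mul_le_mul_right m (card_le_indepNum hD.image_fst)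
  · obtain ⟨S, hS, hScard⟩ := exists_isIndependentSet_card_eq_indepNum G
    choose A hA hAcard using fun i => exists_isIndependentSet_card_eq_indepNum (F i)
    calc indepNum G * m = (S.sigma A).card := by
          simp only [Finset.card_sigma, hAcard, hF, Finset.sum_const, smul_eq_mul, hScard]
      _ ≤ indepNum (GLP G F) := card_le_indepNum (isIndependentSet_sigma hS hA)

theorem indepDomNum_GLP_of_forall_eq {m : ℕ} (hF : ∀ i, indepDomNum (F i) = m) :
    indepDomNum (GLP G F) = indepDomNum G * m := by
  obtain ⟨S, hS, hScard⟩ := exists_isMaximalIndependentSet_card_eq_indepDomNum G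
  choose A hA hAcard using fun i => exists_isMaximalIndependentSet_card_eq_indepDomNum (F i)
  apply le_antisymm
  · calc indepDomNum (GLP G F) ≤ (S.sigma A).card :=
          indepDomNum_le_card (isMaximalIndependentSet_sigma hS hA fun i j => by simp [hAcard, hF])
      _ = indepDomNum G * m := by
          simp only [Finset.card_sigma, hAcard, hF, Finset.sum_const, smul_eq_mul, hScard]
  · obtain ⟨D, hD, hDcard⟩ := exists_isMaximalIndependentSet_card_eq_indepDomNum (GLP G F)
    by_cases hV : ∀ i, Nonempty (V i)
    · calc indepDomNum G * m ≤ (D.image Sigma.fst).card * m :=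
            Nat.mul_le_mul_right m (indepDomNum_le_card hD.image_fst)
        _ = ∑ _i ∈ D.image Sigma.fst, m := by rw [Finset.sum_const, smul_eq_mul]
        _ ≤ ∑ i ∈ D.image Sigma.fst, (layer D i).card :=
            Finset.sum_le_sum fun i hi => hF i ▸ indepDomNum_le_card (hD.layer hi)
        _ = indepDomNum (GLP G F) := by rw [← card_eq_sum_card_layer, hDcard]
    · obtain ⟨i, hi⟩ := not_forall.mp hV
      have := not_nonempty_iff.mp hi
      simp [← hF i, indepDomNum_eq_zero_of_isEmpty]

end LexicographicProduct

theorem stmt_14_general {n : ℕ} (G : SimpleGraph (Fin n))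
    (V : Fin n → Type) [∀ i, Fintype (V i)] (F : ∀ i, SimpleGraph (V i)) :
    ((∀ i j, indepDomNum (F i) = indepDomNum (F j)) →
      ∀ i, indepDomNum (GLP G F) = indepDomNum G * indepDomNum (F i)) ∧
    ((∀ i j, indepNum (F i) = indepNum (F j)) →
      ∀ i, indepNum (GLP G F) = indepNum G * indepNum (F i)) :=
  ⟨fun h i => indepDomNum_GLP_of_forall_eq fun j => h j i,
    fun h i => indepNum_GLP_of_forall_eq fun j => h j i⟩

/-- If all `F i` have the same independent domination number, then
`i(G[Φ]) = i(G)·i(F i)`; if all `F i` have the same independence number, then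
`β₀(G[Φ]) = β₀(G)·β₀(F i)`. -/
theorem stmt_14 {n : ℕ} (hn : 2 ≤ n) (G : SimpleGraph (Fin n)) (hG : G.Connected)
    (V : Fin n → Type) [∀ i, Fintype (V i)] (F : ∀ i, SimpleGraph (V i)) :
    ((∀ i j, indepDomNum (F i) = indepDomNum (F j)) →
      ∀ i, indepDomNum (GLP G F) = indepDomNum G * indepDomNum (F i)) ∧
    ((∀ i j, indepNum (F i) = indepNum (F j)) →
      ∀ i, indepNum (GLP G F) = indepNum G * indepNum (F i)) :=
  stmt_14_general G V F
end
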